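/- Let X₁, X₂, … be independent, identically distributed real random variables with mean μ > 0 and standard deviation at most cμ, where c > 0 is a known constant. Fix ε ∈ (0,1/3) and δ ∈ (0,1). Set m = ⌈(c/ε)² f(ε)⌉ and n = 2⌈ln(2/δ)/ln(4/3)⌉ + 1. For i = 1,…,n let Sᵢ = (X_{(i−1)m+1} + ⋯ + X_{im})/m be the average of the i-th block of m samples, and let R₁,…,R_n be i.i.d. uniform random variables on [1−ε, 1+ε], independent of the Xⱼ. Let μ̂ = median{S₁R₁, …, S_nR_n}. Then P(|μ̂ − μ| > εμ) ≤ δ, and μ̂ is computed from exactly m·n = ⌈(c/ε)² f(ε)⌉·(2⌈ln(2/δ)/ln(4/3)⌉ + 1) samples of the sequence. -/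

import Mathlib

open MeasureTheory ProbabilityTheory Real

/-- The uniform probability measure on the interval `[a, b]`. -/
noncomputable def uniformIcc (a b : ℝ) : Measure ℝ :=
  (ENNReal.ofReal (b - a))⁻¹ • (MeasureTheory.volume.restrict (Set.Icc a b))

/-- The median of `2*n+1` real values: their `(n+1)`-st smallest value. -/
noncomputable def medianOf {n : ℕ} (v : Fin (2 * n + 1) → ℝ) : ℝ :=
  (Multiset.sort (↑(List.ofFn v)) (· ≤ ·)).get ⟨n, by simp [Multiset.length_sort]; omega⟩

/-- The nuisance factor `f(ε) = (1+ε)/((1-ε)² (1+ε-ε²))`. -/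
noncomputable def nuisance (ε : ℝ) : ℝ := (1 + ε) / ((1 - ε) ^ 2 * (1 + ε - ε ^ 2))

/-!
Each block estimate `Sᵢ Rᵢ` exceeds `(1+ε)μ` with probability at most `1/4`: conditionally on
`Sᵢ = s`, the uniform factor pushes `s Rᵢ` above `(1+ε)μ` with probability at most `x⁺` for
`x = a (s - μ)`, `a = (1+ε)/(2εμ)`, and `x⁺ ≤ (x + 1/2)² / 2` integrates to
`(a² Var Sᵢ + 1/4) / 2 ≤ 1/4`, because `Var Sᵢ ≤ c²μ²/m ≤ (εμ/(1+ε))²` as `f(ε) ≥ (1+ε)²`.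
The same holds below `(1-ε)μ`. The blocks are independent, so by Chernoff's bound with `eᵗ = 3`
a majority `K+1` of the `2K+1` estimates falls on one side with probability at most
`(3/2)^(2K+1) / 3^(K+1) = (3/4)^K / 2`, and the median leaves `[(1-ε)μ, (1+ε)μ]` only if that
happens. Finally `(3/4)^K ≤ δ/2` by the choice of `K`.
-/

open scoped Finset ENNReal

lemma uniformIcc_apply (a b : ℝ) (s : Set ℝ) :
    uniformIcc a b s = volume (s ∩ Set.Icc a b) / ENNReal.ofReal (b - a) := by
  rw [uniformIcc, Measure.smul_apply, smul_eq_mul, Measure.restrict_apply' measurableSet_Icc,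
    ENNReal.div_eq_inv_mul]

section UniformTails

variable {ε μ : ℝ} (hε₀ : 0 < ε) (hε₁ : ε < 1) (hμ : 0 < μ)
include hε₀ hε₁ hμ

lemma uniformIcc_lt_mul_le (s : ℝ) :
    uniformIcc (1 - ε) (1 + ε) {r | (1 + ε) * μ < s * r} ≤
      ENNReal.ofReal ((1 + ε) / (2 * ε * μ) * (s - μ)) := by
  have hsub : {r | (1 + ε) * μ < s * r} ∩ Set.Icc (1 - ε) (1 + ε) ⊆
      Set.Ioc (1 + ε - (1 + ε) * (s - μ) / μ) (1 + ε) := by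
    rintro r ⟨hr : (1 + ε) * μ < s * r, hr₁, hr₂⟩
    have hs : μ < s := by nlinarith
    refine ⟨?_, hr₂⟩
    rw [sub_lt_comm, lt_div_iff₀ hμ]
    nlinarith [mul_nonneg (sub_nonneg.2 hr₂) (sub_nonneg.2 hs.le)]
  rw [uniformIcc_apply, ENNReal.div_le_iff (by simp; linarith) ENNReal.ofReal_ne_top,
    ← ENNReal.ofReal_mul' (by linarith)]
  refine (measure_mono hsub).trans (Real.volume_Ioc.trans_le (ENNReal.ofReal_le_ofReal ?_))
  exact le_of_eq (by field_simp; ring)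

lemma uniformIcc_mul_lt_le (s : ℝ) :
    uniformIcc (1 - ε) (1 + ε) {r | s * r < (1 - ε) * μ} ≤
      ENNReal.ofReal ((1 + ε) / (2 * ε * μ) * (μ - s)) := by
  have hsub : {r | s * r < (1 - ε) * μ} ∩ Set.Icc (1 - ε) (1 + ε) ⊆
      Set.Ico (1 - ε) (1 - ε + (1 + ε) * (μ - s) / μ) := by
    rintro r ⟨hr : s * r < (1 - ε) * μ, hr₁, hr₂⟩
    have hs : s < μ := by nlinarith
    refine ⟨hr₁, ?_⟩
    rw [← sub_lt_iff_lt_add', lt_div_iff₀ hμ]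
    nlinarith [mul_nonneg (sub_nonneg.2 hr₂) (sub_nonneg.2 hs.le)]
  rw [uniformIcc_apply, ENNReal.div_le_iff (by simp; linarith) ENNReal.ofReal_ne_top,
    ← ENNReal.ofReal_mul' (by linarith)]
  refine (measure_mono hsub).trans (Real.volume_Ico.trans_le (ENNReal.ofReal_le_ofReal ?_))
  exact le_of_eq (by field_simp; ring)

end UniformTails

section Conditioning

variable {Ω : Type*} [MeasurableSpace Ω] {P : Measure Ω}

lemma ProbabilityTheory.IndepFun.measure_preimage_le_lintegral {α β : Type*}
    [MeasurableSpace α] [MeasurableSpace β] [IsFiniteMeasure P] {S : Ω → α} {R : Ω → β}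
    (hS : Measurable S) (hR : Measurable R) (h : IndepFun S R P) {B : Set (α × β)}
    (hB : MeasurableSet B) {g : α → ℝ≥0∞} (hbound : ∀ s, P.map R (Prod.mk s ⁻¹' B) ≤ g s) :
    P ((fun ω => (S ω, R ω)) ⁻¹' B) ≤ ∫⁻ ω, g (S ω) ∂P := by
  rw [← Measure.map_apply (hS.prodMk hR) hB,
    (indepFun_iff_map_prod_eq_prod_map_map hS.aemeasurable hR.aemeasurable).1 h,
    Measure.prod_apply hB]
  exact (lintegral_mono hbound).trans (lintegral_map_le g S)

variable [IsProbabilityMeasure P]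

lemma integral_sq_affine {S : Ω → ℝ} (hS : MemLp S 2 P) {μ : ℝ} (hmean : P[S] = μ) (a b : ℝ) :
    ∫ ω, (a * (S ω - μ) + b) ^ 2 ∂P = a ^ 2 * Var[S; P] + b ^ 2 := by
  have hZ : MemLp (fun ω => a * (S ω - μ) + b) 2 P :=
    ((hS.sub (memLp_const μ)).const_mul a).add (memLp_const b)
  have hvar : Var[fun ω => a * (S ω - μ) + b; P] = a ^ 2 * Var[S; P] := by
    have hSm := hS.1
    rw [variance_add_const (by fun_prop), variance_const_mul, variance_sub_const hSm]
  have hmeanZ : ∫ ω, a * (S ω - μ) + b ∂P = b := by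
    have hi := hS.integrable one_le_two
    rw [integral_add (by fun_prop) (by fun_prop), integral_const_mul,
      integral_sub hi (by fun_prop)]
    simp [hmean]
  have hdecomp := variance_eq_sub hZ
  simp only [Pi.pow_apply, hmeanZ] at hdecomp
  linarith

end Conditioning

lemma sq_div_mul_le_quarter {ε μ v : ℝ} (hε₀ : 0 < ε) (hμ : 0 < μ)
    (hv : v ≤ (ε * μ / (1 + ε)) ^ 2) : ((1 + ε) / (2 * ε * μ)) ^ 2 * v ≤ 1 / 4 := by
  calc ((1 + ε) / (2 * ε * μ)) ^ 2 * v ≤ ((1 + ε) / (2 * ε * μ)) ^ 2 * (ε * μ / (1 + ε)) ^ 2 := by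
        gcongr
    _ = 1 / 4 := by field_simp; ring

section ProductTails

variable {Ω : Type*} [MeasurableSpace Ω] {P : Measure Ω} [IsProbabilityMeasure P]
  {S R : Ω → ℝ} (hS : Measurable S) (hR : Measurable R) (hSR : IndepFun S R P)
  (hS2 : MemLp S 2 P) {μ : ℝ} (hmean : P[S] = μ)
include hS hR hSR hS2 hmean

lemma ProbabilityTheory.IndepFun.measureReal_preimage_le_quarter {B : Set (ℝ × ℝ)}
    (hB : MeasurableSet B) {a : ℝ} (hvar : a ^ 2 * Var[S; P] ≤ 1 / 4)
    (hbound : ∀ s, P.map R (Prod.mk s ⁻¹' B) ≤ ENNReal.ofReal (a * (s - μ))) :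
    P.real ((fun ω => (S ω, R ω)) ⁻¹' B) ≤ 1 / 4 := by
  have hq : ∀ x : ℝ, x ≤ (x + 1 / 2) ^ 2 / 2 := fun x => by nlinarith [sq_nonneg (x - 1 / 2)]
  have hint : Integrable (fun ω => (a * (S ω - μ) + 1 / 2) ^ 2 / 2) P :=
    (((hS2.sub (memLp_const μ)).const_mul a).add (memLp_const _)).integrable_sq.div_const _
  refine ENNReal.toReal_le_of_le_ofReal (by norm_num) ?_
  calc P ((fun ω => (S ω, R ω)) ⁻¹' B)
      ≤ ∫⁻ ω, ENNReal.ofReal ((a * (S ω - μ) + 1 / 2) ^ 2 / 2) ∂P :=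
        hSR.measure_preimage_le_lintegral hS hR hB
          fun s => (hbound s).trans (ENNReal.ofReal_le_ofReal (hq _))
    _ = ENNReal.ofReal ((a ^ 2 * Var[S; P] + (1 / 2) ^ 2) / 2) := by
        rw [← ofReal_integral_eq_lintegral_ofReal hint (ae_of_all _ fun _ => by positivity),
          integral_div, integral_sq_affine hS2 hmean]
    _ ≤ ENNReal.ofReal (1 / 4) := ENNReal.ofReal_le_ofReal (by linarith)

lemma measureReal_lt_mul_le_quarter {ε : ℝ} (hε₀ : 0 < ε) (hε₁ : ε < 1) (hμ : 0 < μ)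
    (hvar : Var[S; P] ≤ (ε * μ / (1 + ε)) ^ 2)
    (hRlaw : P.map R = uniformIcc (1 - ε) (1 + ε)) :
    P.real {ω | (1 + ε) * μ < S ω * R ω} ≤ 1 / 4 :=
  hSR.measureReal_preimage_le_quarter hS hR hS2 hmean
    (measurableSet_lt measurable_const (measurable_fst.mul measurable_snd))
    (sq_div_mul_le_quarter hε₀ hμ hvar)
    fun s => hRlaw ▸ uniformIcc_lt_mul_le hε₀ hε₁ hμ s

lemma measureReal_mul_lt_le_quarter {ε : ℝ} (hε₀ : 0 < ε) (hε₁ : ε < 1) (hμ : 0 < μ)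
    (hvar : Var[S; P] ≤ (ε * μ / (1 + ε)) ^ 2)
    (hRlaw : P.map R = uniformIcc (1 - ε) (1 + ε)) :
    P.real {ω | S ω * R ω < (1 - ε) * μ} ≤ 1 / 4 :=
  hSR.measureReal_preimage_le_quarter hS hR hS2 hmean
    (measurableSet_lt (measurable_fst.mul measurable_snd) measurable_const)
    (a := -((1 + ε) / (2 * ε * μ))) (by simpa using sq_div_mul_le_quarter hε₀ hμ hvar)
    fun s => hRlaw ▸ (uniformIcc_mul_lt_le hε₀ hε₁ hμ s).trans_eq (congrArg _ (by ring))

end ProductTails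

section SampleMean

variable {Ω : Type*} [MeasurableSpace Ω] {P : Measure Ω} {m : ℕ}

lemma integral_sum_div (hm : m ≠ 0) {X : Fin m → Ω → ℝ} (hX : ∀ l, Integrable (X l) P) {μ : ℝ}
    (hmean : ∀ l, P[X l] = μ) : ∫ ω, (∑ l, X l ω) / m ∂P = μ := by
  rw [integral_div, integral_finsetSum _ fun l _ => hX l]
  simp [hmean, hm]

lemma variance_sum_div_le {X : Fin m → Ω → ℝ} (hX : iIndepFun X P) (hX2 : ∀ l, MemLp (X l) 2 P)
    {v : ℝ} (hv : ∀ l, Var[X l; P] ≤ v) : Var[fun ω => (∑ l, X l ω) / m; P] ≤ v / m := by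
  have hsum : Var[∑ l, X l; P] ≤ m * v := by
    rw [IndepFun.variance_sum (fun l _ => hX2 l) fun i _ j _ hij => hX.indepFun hij]
    simpa using Finset.sum_le_sum fun l (_ : l ∈ Finset.univ) => hv l
  have hdiv : (fun ω => (∑ l, X l ω) / m) = fun ω => (m : ℝ)⁻¹ * (∑ l, X l) ω := by
    ext ω
    rw [Finset.sum_apply, div_eq_inv_mul]
  rw [hdiv, variance_const_mul]
  rcases eq_or_ne m 0 with rfl | hm
  · simp
  calc ((m : ℝ)⁻¹) ^ 2 * Var[∑ l, X l; P] ≤ ((m : ℝ)⁻¹) ^ 2 * (m * v) := by gcongr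
    _ = v / m := by field_simp

end SampleMean

noncomputable def scaledMean {m : ℕ} (x : Option (Fin m) → ℝ) : ℝ :=
  (∑ l, x (some l)) / m * x none

lemma measurable_scaledMean (m : ℕ) : Measurable (scaledMean (m := m)) := by
  unfold scaledMean
  fun_prop

section ScaledMean

variable {Ω : Type*} [MeasurableSpace Ω] {P : Measure Ω} [IsProbabilityMeasure P] {m : ℕ}

lemma measureReal_scaledMean_tails (hm : m ≠ 0) {Z : Option (Fin m) → Ω → ℝ}
    (hZ : iIndepFun Z P) (hZm : ∀ t, Measurable (Z t)) (hZ2 : ∀ l, MemLp (Z (some l)) 2 P)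
    {ε μ : ℝ} (hε₀ : 0 < ε) (hε₁ : ε < 1) (hμ : 0 < μ) (hmean : ∀ l, P[Z (some l)] = μ)
    (hvar : ∀ l, Var[Z (some l); P] ≤ m * (ε * μ / (1 + ε)) ^ 2)
    (hlaw : P.map (Z none) = uniformIcc (1 - ε) (1 + ε)) :
    P.real {ω | (1 + ε) * μ < scaledMean (Z · ω)} ≤ 1 / 4 ∧
      P.real {ω | scaledMean (Z · ω) < (1 - ε) * μ} ≤ 1 / 4 := by
  set S : Ω → ℝ := fun ω => (∑ l, Z (some l) ω) / m
  have hSm : Measurable S := by fun_prop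
  have hSR : IndepFun S (Z none) P := by
    have h := hZ.indepFun_finsetSum_of_notMem hZm (s := Finset.univ.map .some) (i := none)
      (by simp)
    convert h.comp (measurable_id.div_const (m : ℝ)) measurable_id using 1
    · ext ω
      simp [S, Finset.sum_apply]
    · rfl
  have hS2 : MemLp S 2 P := by
    simpa [S, div_eq_mul_inv] using (memLp_finsetSum _ fun l _ => hZ2 l).mul_const (m : ℝ)⁻¹
  have hSmean : P[S] = μ := integral_sum_div hm (fun l => (hZ2 l).integrable one_le_two) hmean
  have hSvar : Var[S; P] ≤ (ε * μ / (1 + ε)) ^ 2 := by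
    refine (variance_sum_div_le (hZ.precomp (Option.some_injective _)) hZ2 hvar).trans_eq ?_
    field_simp
  exact ⟨measureReal_lt_mul_le_quarter hSm (hZm none) hSR hS2 hSmean hε₀ hε₁ hμ hSvar hlaw,
    measureReal_mul_lt_le_quarter hSm (hZm none) hSR hS2 hSmean hε₀ hε₁ hμ hSvar hlaw⟩

end ScaledMean

lemma exp_mul_indicator_one {Ω : Type*} (A : Set Ω) (t : ℝ) (ω : Ω) :
    exp (t * A.indicator 1 ω) = 1 + (exp t - 1) * A.indicator 1 ω := by
  by_cases hω : ω ∈ A <;> simp [hω]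

section Independence

variable {Ω : Type*} [MeasurableSpace Ω] {P : Measure Ω}

lemma ProbabilityTheory.iIndepFun.curry {ι κ β : Type*} [MeasurableSpace β]
    {X : ι → κ → Ω → β} (hX : ∀ i j, Measurable (X i j))
    (h : iIndepFun (fun p : ι × κ => X p.1 p.2) P) :
    iIndepFun (fun i ω j => X i j ω) P := by
  have := h.isProbabilityMeasure
  have : ∀ i j, IsProbabilityMeasure (P.map (X i j)) :=
    fun i j ↦ Measure.isProbabilityMeasure_map (hX i j).aemeasurable
  have hrow : ∀ i, P.map (fun ω j => X i j ω) = Measure.infinitePi (fun j => P.map (X i j)) :=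
    fun i => (iIndepFun_iff_map_fun_eq_infinitePi_map (hX i)).1
      (h.precomp (g := fun j => (i, j)) (Prod.mk_right_injective i))
  rw [iIndepFun_iff_map_fun_eq_infinitePi_map (fun i => measurable_pi_lambda _ (hX i))]
  simp_rw [hrow]
  rw [← Measure.infinitePi_map_curry,
    ← (iIndepFun_iff_map_fun_eq_infinitePi_map (fun p : ι × κ => hX p.1 p.2)).1 h,
    Measure.map_map (by fun_prop) (by fun_prop)]
  rfl

lemma ProbabilityTheory.iIndepFun.iIndepSet_preimage {ι β : Type*} [MeasurableSpace β]
    {Y : ι → Ω → β} (h : iIndepFun Y P) (hY : ∀ i, Measurable (Y i)) {s : ι → Set β}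
    (hs : ∀ i, MeasurableSet (s i)) : iIndepSet (fun i => Y i ⁻¹' s i) P :=
  (iIndepSet_iff_meas_biInter fun i => hY i (hs i)).2
    fun _ => h.meas_biInter fun i _ => ⟨s i, hs i, rfl⟩

lemma mgf_indicator_one [IsProbabilityMeasure P] {A : Set Ω} (hA : MeasurableSet A) (t : ℝ) :
    mgf (A.indicator 1) P t = 1 + (exp t - 1) * P.real A := by
  have hI : Integrable (A.indicator (1 : Ω → ℝ)) P := (integrable_const 1).indicator hA
  simp_rw [mgf, exp_mul_indicator_one]
  rw [integral_add (integrable_const _) (hI.const_mul _), integral_const_mul,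
    integral_indicator_one hA]
  simp

lemma measureReal_le_card_le_exp_mul [IsProbabilityMeasure P] {ι : Type*} [Fintype ι]
    {A : ι → Set Ω} [∀ i, DecidablePred (· ∈ A i)] (hA : ∀ i, MeasurableSet (A i))
    (h : iIndepSet A P) {p t : ℝ} (ht : 0 ≤ t) (hp : ∀ i, P.real (A i) ≤ p) (k : ℕ) :
    P.real {ω | k ≤ #{i | ω ∈ A i}} ≤ exp (-t * k) * (1 + (exp t - 1) * p) ^ Fintype.card ι := by
  set X : ι → Ω → ℝ := fun i => (A i).indicator 1
  have hXm : ∀ i, Measurable (X i) := fun i => measurable_const.indicator (hA i)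
  have hXind : iIndepFun X P := h.iIndepFun_indicator
  have hcount : ∀ ω, ((#{i | ω ∈ A i} : ℕ) : ℝ) = (∑ i, X i) ω := fun ω => by
    rw [Finset.natCast_card_filter, Finset.sum_apply]
    simp only [X, Set.indicator_apply, Pi.one_apply]
  have hint : Integrable (fun ω => exp (t * (∑ i, X i) ω)) P :=
    hXind.integrable_exp_mul_sum hXm fun i _ => by
      simp_rw [X, exp_mul_indicator_one]
      exact (integrable_const _).add (((integrable_const (1 : ℝ)).indicator (hA i)).const_mul _)
  calc P.real {ω | k ≤ #{i | ω ∈ A i}} = P.real {ω | (k : ℝ) ≤ (∑ i, X i) ω} := by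
        simp_rw [← hcount, Nat.cast_le]
    _ ≤ exp (-t * k) * mgf (∑ i, X i) P t := measure_ge_le_exp_mul_mgf _ ht hint
    _ = exp (-t * k) * ∏ i, (1 + (exp t - 1) * P.real (A i)) := by
        rw [hXind.mgf_sum hXm, Finset.prod_congr rfl fun i _ => mgf_indicator_one (hA i) t]
    _ ≤ exp (-t * k) * (1 + (exp t - 1) * p) ^ Fintype.card ι := by
        have he : 0 ≤ exp t - 1 := by linarith [one_le_exp ht]
        gcongr
        calc ∏ i, (1 + (exp t - 1) * P.real (A i)) ≤ ∏ _i : ι, (1 + (exp t - 1) * p) :=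
              Finset.prod_le_prod (fun i _ => by positivity) fun i _ => by gcongr; exact hp i
          _ = (1 + (exp t - 1) * p) ^ Fintype.card ι := by simp

end Independence

section SortedList

variable {l : List ℝ} (hl : l.Pairwise (· ≤ ·)) {n : ℕ} (hn : n < l.length) {x : ℝ}
include hl

lemma List.Pairwise.length_sub_le_countP_lt (hx : x < l[n]) :
    l.length - n ≤ l.countP (x < ·) := by
  calc l.length - n = (l.drop n).length := (List.length_drop ..).symm
    _ = (l.drop n).countP (x < ·) := by
        refine (List.countP_eq_length.2 fun y hy => ?_).symm
        obtain ⟨k, hk, rfl⟩ := List.mem_iff_getElem.1 hy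
        rw [List.getElem_drop, decide_eq_true_eq]
        rw [List.length_drop] at hk
        exact hx.trans_le <| hl.rel_get_of_le (a := ⟨n, hn⟩) (b := ⟨n + k, by omega⟩)
          (by simp [Fin.le_def])
    _ ≤ l.countP (x < ·) := (List.drop_sublist n l).countP_le

lemma List.Pairwise.succ_le_countP_gt (hx : l[n] < x) :
    n + 1 ≤ l.countP (· < x) := by
  calc n + 1 = (l.take (n + 1)).length := by simp; omega
    _ = (l.take (n + 1)).countP (· < x) := by
        refine (List.countP_eq_length.2 fun y hy => ?_).symm
        obtain ⟨k, hk, rfl⟩ := List.mem_iff_getElem.1 hy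
        rw [List.getElem_take, decide_eq_true_eq]
        rw [List.length_take] at hk
        exact lt_of_le_of_lt (hl.rel_get_of_le (a := ⟨k, by omega⟩) (b := ⟨n, hn⟩)
          (by simp [Fin.le_def]; omega)) hx
    _ ≤ l.countP (· < x) := (List.take_sublist _ l).countP_le

end SortedList

lemma card_filter_eq_countP_sort {N : ℕ} (v : Fin N → ℝ) (p : ℝ → Prop) [DecidablePred p] :
    #{i | p (v i)} = (Multiset.sort (↑(List.ofFn v)) (· ≤ ·)).countP (fun y => decide (p y)) := by
  rw [← Multiset.coe_countP, Multiset.sort_eq, ← Fin.univ_val_map, Multiset.countP_map]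
  rfl

lemma le_card_filter_lt_of_lt_medianOf {n : ℕ} (v : Fin (2 * n + 1) → ℝ) {x : ℝ}
    (hx : x < medianOf v) : n + 1 ≤ #{i | x < v i} := by
  rw [card_filter_eq_countP_sort v (x < ·)]
  have h := (Multiset.pairwise_sort _ _).length_sub_le_countP_lt (by simp; omega) hx
  simp only [Multiset.length_sort, Multiset.coe_card, List.length_ofFn] at h
  omega

lemma le_card_filter_gt_of_medianOf_lt {n : ℕ} (v : Fin (2 * n + 1) → ℝ) {x : ℝ}
    (hx : medianOf v < x) : n + 1 ≤ #{i | v i < x} := by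
  rw [card_filter_eq_countP_sort v (· < x)]
  exact (Multiset.pairwise_sort _ _).succ_le_countP_gt (by simp; omega) hx

section MedianTrick

variable {Ω : Type*} [MeasurableSpace Ω] {P : Measure Ω} [IsProbabilityMeasure P] {K : ℕ}

lemma measureReal_majority_le {A : Fin (2 * K + 1) → Set Ω} [∀ i, DecidablePred (· ∈ A i)]
    (hA : ∀ i, MeasurableSet (A i)) (h : iIndepSet A P) (hp : ∀ i, P.real (A i) ≤ 1 / 4) :
    P.real {ω | K + 1 ≤ #{i | ω ∈ A i}} ≤ (3 / 4) ^ K / 2 := by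
  have hlog3 : 0 ≤ log 3 := log_nonneg (by norm_num)
  refine (measureReal_le_card_le_exp_mul hA h hlog3 hp _).trans_eq ?_
  rw [Fintype.card_fin, neg_mul, exp_neg, mul_comm (log 3), ← log_pow, exp_log (by positivity),
    exp_log (by norm_num), pow_succ, pow_succ, pow_mul]
  field_simp
  ring_nf
  rw [← mul_pow]
  norm_num

lemma measureReal_medianOf_notMem_Icc_le {Y : Fin (2 * K + 1) → Ω → ℝ}
    (hY : ∀ i, Measurable (Y i)) (h : iIndepFun Y P) {lo hi : ℝ}
    (hhi : ∀ i, P.real {ω | hi < Y i ω} ≤ 1 / 4) (hlo : ∀ i, P.real {ω | Y i ω < lo} ≤ 1 / 4) :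
    P.real {ω | medianOf (Y · ω) ∉ Set.Icc lo hi} ≤ (3 / 4) ^ K := by
  have hsub : {ω | medianOf (Y · ω) ∉ Set.Icc lo hi} ⊆
      {ω | K + 1 ≤ #{i | hi < Y i ω}} ∪ {ω | K + 1 ≤ #{i | Y i ω < lo}} := by
    intro ω hω
    rcases not_and_or.1 hω with hlt | hgt
    · exact Or.inr (le_card_filter_gt_of_medianOf_lt _ (not_le.1 hlt))
    · exact Or.inl (le_card_filter_lt_of_lt_medianOf _ (not_le.1 hgt))
  calc _ ≤ _ := measureReal_mono hsub
    _ ≤ _ := measureReal_union_le _ _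
    _ ≤ (3 / 4) ^ K / 2 + (3 / 4) ^ K / 2 := add_le_add
        (measureReal_majority_le (A := fun i => {ω | hi < Y i ω})
          (fun i => hY i measurableSet_Ioi)
          (h.iIndepSet_preimage hY fun _ => measurableSet_Ioi) hhi)
        (measureReal_majority_le (A := fun i => {ω | Y i ω < lo})
          (fun i => hY i measurableSet_Iio)
          (h.iIndepSet_preimage hY fun _ => measurableSet_Iio) hlo)
    _ = (3 / 4) ^ K := by ring

end MedianTrick

/-- Indexes the family `Sum.elim X R`: block `i` consists of the samples `X (i * m + l)`, `l < m`,
and the factor `R i`. -/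
def blockIndex (m : ℕ) {n : ℕ} : Fin n × Option (Fin m) → ℕ ⊕ Fin n
  | (i, none) => .inr i
  | (i, some l) => .inl (i * m + l)

lemma blockIndex_injective (m n : ℕ) : Function.Injective (blockIndex m (n := n)) := by
  rintro ⟨i, _ | l⟩ ⟨j, _ | l'⟩ h <;> simp only [blockIndex, Sum.inl.injEq, Sum.inr.injEq,
    reduceCtorEq] at h
  · rw [h]
  · have := (finProdFinEquiv (m := n) (n := m)).injective (a₁ := (i, l)) (a₂ := (j, l'))
      (Fin.ext (by simp [finProdFinEquiv]; linarith))
    simp_all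

lemma scaledMean_blockIndex {Ω : Type*} {m n : ℕ} (X : ℕ → Ω → ℝ) (R : Fin n → Ω → ℝ)
    (i : Fin n) (ω : Ω) : scaledMean (fun t => Sum.elim X R (blockIndex m (i, t)) ω) =
      (∑ l ∈ Finset.range m, X (i * m + l) ω) / m * R i ω := by
  simp [scaledMean, blockIndex, Fin.sum_univ_eq_sum_range (fun l => X (i * m + l) ω)]

lemma measureReal_medianOf_blocks_notMem_Icc_le {Ω : Type*} [MeasurableSpace Ω] {P : Measure Ω}
    [IsProbabilityMeasure P] {m K : ℕ} (hm : m ≠ 0) {X : ℕ → Ω → ℝ}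
    {R : Fin (2 * K + 1) → Ω → ℝ} (hXm : ∀ i, Measurable (X i)) (hRm : ∀ i, Measurable (R i))
    (hindep : iIndepFun (Sum.elim X R) P) (hX2 : ∀ i, MemLp (X i) 2 P) {ε μ : ℝ}
    (hε₀ : 0 < ε) (hε₁ : ε < 1) (hμ : 0 < μ) (hmean : ∀ i, P[X i] = μ)
    (hvar : ∀ i, Var[X i; P] ≤ m * (ε * μ / (1 + ε)) ^ 2)
    (hR : ∀ i, P.map (R i) = uniformIcc (1 - ε) (1 + ε)) :
    P.real {ω | medianOf (fun i : Fin (2 * K + 1) =>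
        (∑ l ∈ Finset.range m, X (i * m + l) ω) / m * R i ω) ∉
        Set.Icc ((1 - ε) * μ) ((1 + ε) * μ)} ≤ (3 / 4) ^ K := by
  have hF : ∀ j, Measurable (Sum.elim X R j) := by rintro (j | j); exacts [hXm j, hRm j]
  set B : Fin (2 * K + 1) → Ω → Option (Fin m) → ℝ :=
    fun i ω t => Sum.elim X R (blockIndex m (i, t)) ω
  have hB : iIndepFun B P := (hindep.precomp (blockIndex_injective m _)).curry fun _ _ => hF _
  have htails i := measureReal_scaledMean_tails hm
    (hindep.precomp ((blockIndex_injective m _).comp (Prod.mk_right_injective i)))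
    (fun _ => hF _) (fun _ => hX2 _) hε₀ hε₁ hμ (fun _ => hmean _) (fun _ => hvar _) (hR i)
  simp_rw [← scaledMean_blockIndex]
  exact measureReal_medianOf_notMem_Icc_le
    (fun i => (measurable_scaledMean m).comp (measurable_pi_lambda _ fun _ => hF _))
    (hB.comp _ fun _ => measurable_scaledMean m) (fun i => (htails i).1) (fun i => (htails i).2)

lemma sq_one_add_le_nuisance {ε : ℝ} (hε₀ : 0 ≤ ε) (hε₁ : ε < 1) : (1 + ε) ^ 2 ≤ nuisance ε := by
  rw [nuisance, le_div_iff₀ (mul_pos (pow_pos (by linarith) 2) (by nlinarith))]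
  nlinarith [mul_nonneg (mul_nonneg hε₀ hε₀) (mul_nonneg hε₀ hε₀), mul_nonneg hε₀ (sq_nonneg ε),
    mul_nonneg (mul_nonneg hε₀ hε₀) (sub_nonneg.2 hε₁.le)]

lemma sq_mul_le_natCeil_nuisance_mul {c ε : ℝ} (hε₀ : 0 < ε) (hε₁ : ε < 1) (x : ℝ) :
    (c * x) ^ 2 ≤ ⌈(c / ε) ^ 2 * nuisance ε⌉₊ * (ε * x / (1 + ε)) ^ 2 := by
  calc (c * x) ^ 2 = (c / ε) ^ 2 * (1 + ε) ^ 2 * (ε * x / (1 + ε)) ^ 2 := by field_simp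
    _ ≤ ⌈(c / ε) ^ 2 * nuisance ε⌉₊ * (ε * x / (1 + ε)) ^ 2 := by
        gcongr
        exact (mul_le_mul_of_nonneg_left (sq_one_add_le_nuisance hε₀.le hε₁) (sq_nonneg _)).trans
          (Nat.le_ceil _)

lemma three_quarters_pow_ceil_le {δ : ℝ} (hδ : 0 < δ) :
    (3 / 4 : ℝ) ^ ⌈log (2 / δ) / log (4 / 3)⌉₊ ≤ δ := by
  set K := ⌈log (2 / δ) / log (4 / 3)⌉₊
  have hlog : log (2 / δ) ≤ K * log (4 / 3) :=
    (div_le_iff₀ (log_pos (by norm_num))).1 (Nat.le_ceil _)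
  have hpow : 2 / δ ≤ (4 / 3) ^ K := by
    rwa [← log_le_log_iff (by positivity) (by positivity), log_pow]
  calc (3 / 4 : ℝ) ^ K = ((4 / 3) ^ K)⁻¹ := by rw [← inv_pow]; norm_num
    _ ≤ (2 / δ)⁻¹ := inv_anti₀ (by positivity) hpow
    _ ≤ δ := by rw [inv_div]; linarith

theorem new_estimate_ras_general {Ω : Type*} [MeasureSpace Ω]
    [IsProbabilityMeasure (ℙ : Measure Ω)]
    (c μ ε δ : ℝ) (hc : 0 < c) (hμ : 0 < μ)
    (hε : ε ∈ Set.Ioo (0 : ℝ) (1 / 3)) (hδ : δ ∈ Set.Ioo (0 : ℝ) 1)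
    (m K : ℕ) (hm : m = ⌈(c / ε) ^ 2 * nuisance ε⌉₊)
    (hK : K = ⌈Real.log (2 / δ) / Real.log (4 / 3)⌉₊)
    (X : ℕ → Ω → ℝ) (R : Fin (2 * K + 1) → Ω → ℝ)
    (hXm : ∀ i, Measurable (X i)) (hRm : ∀ i, Measurable (R i))
    (hindep : iIndepFun (Sum.elim X R) ℙ)
    (hX2 : ∀ i, MemLp (X i) 2 ℙ)
    (hmean : ∀ i, ∫ ω, X i ω ∂ℙ = μ)
    (hsd : ∀ i, Real.sqrt (variance (X i) ℙ) ≤ c * μ)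
    (hR : ∀ i, Measure.map (R i) ℙ = uniformIcc (1 - ε) (1 + ε)) :
    ℙ {ω | ε * μ <
        |medianOf (fun i : Fin (2 * K + 1) =>
          ((∑ l ∈ Finset.range m, X (i.val * m + l) ω) / m) * R i ω) - μ|} ≤
        ENNReal.ofReal δ ∧
      m * (2 * K + 1) =
        ⌈(c / ε) ^ 2 * nuisance ε⌉₊ * (2 * ⌈Real.log (2 / δ) / Real.log (4 / 3)⌉₊ + 1) := by
  obtain ⟨hε₀, hε₁⟩ := hε
  refine ⟨?_, by rw [hm, hK]⟩
  have hm0 : m ≠ 0 := by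
    have := (sq_one_add_le_nuisance hε₀.le (by linarith)).trans_lt' (by positivity)
    rw [hm]
    exact (Nat.ceil_pos.2 (by positivity)).ne'
  have hvar j : Var[X j; ℙ] ≤ m * (ε * μ / (1 + ε)) ^ 2 :=
    ((Real.sqrt_le_left (by positivity)).1 (hsd j)).trans
      (hm ▸ sq_mul_le_natCeil_nuisance_mul hε₀ (by linarith) μ)
  have hmed := measureReal_medianOf_blocks_notMem_Icc_le hm0 hXm hRm hindep hX2 hε₀
    (by linarith) hμ hmean hvar hR
  refine (measure_mono ?_).trans ((ofReal_measureReal (measure_ne_top _ _)).symm.trans_le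
    (ENNReal.ofReal_le_ofReal (hmed.trans (hK ▸ three_quarters_pow_ceil_le hδ.1))))
  rintro ω (hω : ε * μ < |_ - μ|) ⟨hlo, hhi⟩
  rcases lt_abs.1 hω with h | h <;> linarith

/-- main theorem: Let `X₁,X₂,…` be i.i.d. with mean `μ > 0` and standard
deviation at most `cμ`, `ε ∈ (0,1/3)`, `δ ∈ (0,1)`.  With `m = ⌈(c/ε)² f(ε)⌉`,
`K = ⌈ln(2/δ)/ln(4/3)⌉` and `n = 2K+1`, let `Sᵢ` be the average of the `i`-th disjoint
block of `m` samples and `R₁,…,R_n` i.i.d. uniform on `[1−ε,1+ε]` and independent of the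
`Xⱼ`.  Then `μ̂ = median{S₁R₁,…,S_nR_n}` satisfies `P(|μ̂ − μ| > εμ) ≤ δ`, and it is
computed from exactly `m·n = ⌈(c/ε)² f(ε)⌉(2⌈ln(2/δ)/ln(4/3)⌉ + 1)` samples. -/
theorem new_estimate_ras {Ω : Type*} [MeasureSpace Ω]
    [IsProbabilityMeasure (ℙ : Measure Ω)]
    (c μ ε δ : ℝ) (hc : 0 < c) (hμ : 0 < μ)
    (hε : ε ∈ Set.Ioo (0 : ℝ) (1 / 3)) (hδ : δ ∈ Set.Ioo (0 : ℝ) 1)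
    (m K : ℕ) (hm : m = ⌈(c / ε) ^ 2 * nuisance ε⌉₊)
    (hK : K = ⌈Real.log (2 / δ) / Real.log (4 / 3)⌉₊)
    (X : ℕ → Ω → ℝ) (R : Fin (2 * K + 1) → Ω → ℝ)
    (hXm : ∀ i, Measurable (X i)) (hRm : ∀ i, Measurable (R i))
    (hindep : iIndepFun (Sum.elim X R) ℙ)
    (hdist : ∀ i, Measure.map (X i) ℙ = Measure.map (X 0) ℙ)
    (hX2 : ∀ i, MemLp (X i) 2 ℙ)
    (hmean : ∀ i, ∫ ω, X i ω ∂ℙ = μ)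
    (hsd : ∀ i, Real.sqrt (variance (X i) ℙ) ≤ c * μ)
    (hR : ∀ i, Measure.map (R i) ℙ = uniformIcc (1 - ε) (1 + ε)) :
    ℙ {ω | ε * μ <
        |medianOf (fun i : Fin (2 * K + 1) =>
          ((∑ l ∈ Finset.range m, X (i.val * m + l) ω) / m) * R i ω) - μ|} ≤
        ENNReal.ofReal δ ∧
      m * (2 * K + 1) =
        ⌈(c / ε) ^ 2 * nuisance ε⌉₊ * (2 * ⌈Real.log (2 / δ) / Real.log (4 / 3)⌉₊ + 1) :=
  new_estimate_ras_general c μ ε δ hc hμ hε hδ m K hm hK X R hXm hRm hindep hX2 hmean hsd hR
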